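/- Let $\mu$ be a Borel probability measure with bounded support on a nonempty Borel class $\mathcal{K}_* \subseteq \mathcal{K}^n$, let $K$ be the convex body with $h_K = \int h_P\, \mu(dP)$, and let $Q$ be any finite nonnegative Minkowski combination of bodies in $\operatorname{supp}\mu$. Then $\operatorname{pspan} Q \subseteq \operatorname{pspan} K$. -/

import Mathlib

/-!
If `u` is orthogonal to `pspan K`, the width `h_K(u) + h_K(-u)` vanishes. Since `h_K` is the
`μ`-average of `h_P`, the width of `K` is the average of the widths of the bodies `P`; these are
nonnegative, so they vanish `μ`-a.e., and, being continuous in `P` for the Hausdorff metric, they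
vanish on all of `supp μ`. Hence `pspan L ≤ pspan K` for every `L ∈ supp μ`, and the `pspan` of a
nonnegative Minkowski combination lies in the sum of the `pspan`s of its summands. Bounded support
makes all support functions `P ↦ h_P(u)` integrable.
-/

open scoped Pointwise RealInnerProductSpace NNReal
open MeasureTheory

noncomputable section

/-- Support function of a convex body. -/
def sfn {n : ℕ} (K : ConvexBody (EuclideanSpace ℝ (Fin n))) (u : EuclideanSpace ℝ (Fin n)) : ℝ :=
  sSup ((fun x => ⟪x, u⟫) '' (K : Set (EuclideanSpace ℝ (Fin n))))

/-- The support of a measure on a topological space. -/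
def msupport {X : Type*} [TopologicalSpace X] [MeasurableSpace X] (μ : Measure X) : Set X :=
  {x | ∀ U : Set X, IsOpen U → x ∈ U → μ U ≠ 0}

/-- `pspan A = span (A - A)`, the linear subspace parallel to the affine hull of `A`. -/
def pspan {n : ℕ} (A : Set (EuclideanSpace ℝ (Fin n))) : Submodule ℝ (EuclideanSpace ℝ (Fin n)) :=
  Submodule.span ℝ (A - A)

local notation "ℝ^" n:max => EuclideanSpace ℝ (Fin n)

theorem ConvexBody.coe_sum {V : Type*} [TopologicalSpace V] [AddCommGroup V] [Module ℝ V]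
    [ContinuousAdd V] {ι : Type*} (s : Finset ι) (K : ι → ConvexBody V) :
    ((∑ i ∈ s, K i : ConvexBody V) : Set V) = ∑ i ∈ s, (K i : Set V) :=
  map_sum (⟨⟨(↑), ConvexBody.coe_zero⟩, ConvexBody.coe_add⟩ : ConvexBody V →+ Set V) K s

instance ConvexBody.secondCountableTopology {V : Type*} [NormedAddCommGroup V] [NormedSpace ℝ V]
    [SecondCountableTopology V] : SecondCountableTopology (ConvexBody V) :=
  let f : ConvexBody V → TopologicalSpace.NonemptyCompacts V :=
    fun K => ⟨⟨K, K.isCompact⟩, K.nonempty⟩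
  have hf : Isometry f := fun K L => ConvexBody.hausdorffEDist_coe K L
  hf.isEmbedding.secondCountableTopology

section Support

variable {X : Type*} [TopologicalSpace X] [MeasurableSpace X] (μ : Measure X)

theorem msupport_eq_support : msupport μ = μ.support := by
  ext x
  rw [Measure.mem_support_iff_forall]
  refine ⟨fun h U hU => ?_, fun h U hU hxU => (h U (hU.mem_nhds hxU)).ne'⟩
  obtain ⟨V, hVU, hV, hxV⟩ := mem_nhds_iff.1 hU
  exact (pos_iff_ne_zero.2 (h V hV hxV)).trans_le (measure_mono hVU)

theorem measure_compl_msupport [HereditarilyLindelofSpace X] : μ (msupport μ)ᶜ = 0 := by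
  rw [msupport_eq_support]
  exact Measure.measure_compl_support

variable {μ}

theorem eqOn_msupport_of_ae_eq {Y : Type*} [TopologicalSpace Y] [T2Space Y] {f g : X → Y}
    (hf : Continuous f) (hg : Continuous g) (h : f =ᵐ[μ] g) : Set.EqOn f g (msupport μ) :=
  fun _ hx => by_contra fun hne => hx _ (isOpen_ne_fun hf hg) hne (ae_iff.1 h)

end Support

section Pspan

variable {n : ℕ}

theorem mem_orthogonal_pspan_iff {A : Set (ℝ^n)} {u : ℝ^n} :
    u ∈ (pspan A)ᗮ ↔ ∀ x ∈ A, ∀ y ∈ A, ⟪x - y, u⟫ = 0 := by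
  rw [← Submodule.span_singleton_le_iff_mem, ← Submodule.le_orthogonal_iff_le_orthogonal, pspan,
    Submodule.span_le, Set.sub_subset_iff]
  simp only [SetLike.mem_coe, Submodule.mem_orthogonal_singleton_iff_inner_left]

theorem pspan_zero : pspan (0 : Set (ℝ^n)) = ⊥ := by
  simp [pspan]

theorem pspan_add_le (A B : Set (ℝ^n)) : pspan (A + B) ≤ pspan A ⊔ pspan B := by
  rw [pspan, Submodule.span_le]
  rintro _ ⟨_, ⟨a, ha, b, hb, rfl⟩, _, ⟨a', ha', b', hb', rfl⟩, rfl⟩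
  dsimp only
  rw [add_sub_add_comm]
  exact Submodule.add_mem_sup (Submodule.subset_span (Set.sub_mem_sub ha ha'))
    (Submodule.subset_span (Set.sub_mem_sub hb hb'))

theorem pspan_smul_le {S : Type*} [SMul S ℝ] [SMul S (ℝ^n)] [IsScalarTower S ℝ (ℝ^n)] (c : S)
    (A : Set (ℝ^n)) : pspan (c • A) ≤ pspan A := by
  rw [pspan, Submodule.span_le]
  rintro _ ⟨_, ⟨x, hx, rfl⟩, _, ⟨y, hy, rfl⟩, rfl⟩
  dsimp only
  rw [← smul_one_smul ℝ c x, ← smul_one_smul ℝ c y, ← smul_sub]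
  exact Submodule.smul_mem _ _ (Submodule.subset_span (Set.sub_mem_sub hx hy))

theorem pspan_sum_le {ι : Type*} (s : Finset ι) (A : ι → Set (ℝ^n)) :
    pspan (∑ i ∈ s, A i) ≤ ⨆ i ∈ s, pspan (A i) := by
  classical
  induction s using Finset.induction_on with
  | empty => simp [pspan_zero]
  | insert i s hi ih =>
    rw [Finset.sum_insert hi, Finset.iSup_insert]
    exact (pspan_add_le _ _).trans (sup_le_sup_left ih _)

end Pspan

section SupportFunction

variable {n : ℕ} {K : ConvexBody (ℝ^n)} {u x y : ℝ^n}

theorem bddAbove_inner_image (K : ConvexBody (ℝ^n)) (u : ℝ^n) :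
    BddAbove ((fun x => ⟪x, u⟫) '' (K : Set (ℝ^n))) :=
  (K.isCompact.image (continuous_id.inner continuous_const)).bddAbove

theorem inner_le_sfn (hx : x ∈ K) (u : ℝ^n) : ⟪x, u⟫ ≤ sfn K u :=
  le_csSup (bddAbove_inner_image K u) ⟨x, hx, rfl⟩

theorem sfn_le_of_forall_inner_le {a : ℝ} (h : ∀ x ∈ K, ⟪x, u⟫ ≤ a) : sfn K u ≤ a :=
  csSup_le (K.nonempty.image _) (by rintro _ ⟨x, hx, rfl⟩; exact h x hx)

theorem sfn_le_sfn_add_norm_mul_dist (K L : ConvexBody (ℝ^n)) (u : ℝ^n) :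
    sfn K u ≤ sfn L u + ‖u‖ * dist K L := by
  refine sfn_le_of_forall_inner_le fun x hx => ?_
  obtain ⟨y, hy, hxy⟩ := L.isCompact.exists_infDist_eq_dist L.nonempty x
  have hdist : dist x y ≤ dist K L :=
    hxy ▸ Metric.infDist_le_hausdorffDist_of_mem hx ConvexBody.hausdorffEDist_ne_top
  calc ⟪x, u⟫ = ⟪y, u⟫ + ⟪x - y, u⟫ := by rw [inner_sub_left]; ring
    _ ≤ sfn L u + ‖x - y‖ * ‖u‖ := add_le_add (inner_le_sfn hy u) (real_inner_le_norm _ _)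
    _ ≤ sfn L u + ‖u‖ * dist K L := by
      rw [← dist_eq_norm, mul_comm]
      gcongr

theorem lipschitzWith_sfn (u : ℝ^n) : LipschitzWith ‖u‖₊ (fun K : ConvexBody (ℝ^n) => sfn K u) :=
  LipschitzWith.of_le_add_mul _ fun K L => sfn_le_sfn_add_norm_mul_dist K L u

def width (K : ConvexBody (ℝ^n)) (u : ℝ^n) : ℝ :=
  sfn K u + sfn K (-u)

theorem continuous_width (u : ℝ^n) : Continuous fun K : ConvexBody (ℝ^n) => width K u :=
  (lipschitzWith_sfn u).continuous.add (lipschitzWith_sfn (-u)).continuous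

theorem inner_sub_le_width (hx : x ∈ K) (hy : y ∈ K) : ⟪x - y, u⟫ ≤ width K u := by
  have := add_le_add (inner_le_sfn hx u) (inner_le_sfn hy (-u))
  rwa [inner_neg_right, ← sub_eq_add_neg, ← inner_sub_left] at this

theorem width_nonneg : 0 ≤ width K u := by
  obtain ⟨x, hx⟩ := K.nonempty
  simpa using inner_sub_le_width (u := u) hx hx

theorem mem_orthogonal_pspan_iff_width_eq_zero : u ∈ (pspan (K : Set (ℝ^n)))ᗮ ↔ width K u = 0 := by
  rw [mem_orthogonal_pspan_iff]
  refine ⟨fun h => le_antisymm ?_ width_nonneg, fun h x hx y hy => le_antisymm ?_ ?_⟩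
  · obtain ⟨x₀, hx₀⟩ := K.nonempty
    have h₁ : sfn K u ≤ ⟪x₀, u⟫ := sfn_le_of_forall_inner_le fun x hx => by
      linarith [h x hx x₀ hx₀, inner_sub_left (𝕜 := ℝ) x x₀ u]
    have h₂ : sfn K (-u) ≤ ⟪x₀, -u⟫ := sfn_le_of_forall_inner_le fun x hx => by
      simp only [inner_neg_right, neg_le_neg_iff]
      linarith [h x hx x₀ hx₀, inner_sub_left (𝕜 := ℝ) x x₀ u]
    rw [inner_neg_right] at h₂
    exact (add_le_add h₁ h₂).trans_eq (add_neg_cancel _)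
  · exact h ▸ inner_sub_le_width hx hy
  · have := h ▸ inner_sub_le_width (u := u) hy hx
    rw [← neg_sub, inner_neg_left] at this
    linarith

end SupportFunction

section Measure

variable {n : ℕ} [MeasurableSpace (ConvexBody (ℝ^n))] {μ : Measure (ConvexBody (ℝ^n))}

theorem integrable_sfn_of_isBounded [OpensMeasurableSpace (ConvexBody (ℝ^n))] [IsFiniteMeasure μ]
    {S : Set (ConvexBody (ℝ^n))} (hS : Bornology.IsBounded S) (hμS : μ Sᶜ = 0) (u : ℝ^n) :
    Integrable (fun P => sfn P u) μ := by
  obtain ⟨C, hC⟩ := isBounded_iff_forall_norm_le.1 ((lipschitzWith_sfn u).isBounded_image hS)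
  refine Integrable.of_bound (lipschitzWith_sfn u).continuous.aestronglyMeasurable C ?_
  filter_upwards [mem_ae_iff.2 hμS] with P hP using hC _ ⟨P, hP, rfl⟩

theorem pspan_le_of_mem_msupport {K L : ConvexBody (ℝ^n)} (hK : ∀ u, sfn K u = ∫ P, sfn P u ∂μ)
    (hint : ∀ u, Integrable (fun P => sfn P u) μ) (hL : L ∈ msupport μ) :
    pspan (L : Set (ℝ^n)) ≤ pspan (K : Set (ℝ^n)) := by
  rw [← Submodule.orthogonal_le_orthogonal_iff]
  intro u hu
  rw [mem_orthogonal_pspan_iff_width_eq_zero] at hu ⊢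
  have hmean : ∫ P, width P u ∂μ = width K u := by
    rw [width, hK, hK]
    exact integral_add (hint u) (hint (-u))
  have hae : (fun P => width P u) =ᵐ[μ] 0 :=
    (integral_eq_zero_iff_of_nonneg (fun _ => width_nonneg) ((hint u).add (hint (-u)))).1
      (hmean.trans hu)
  exact eqOn_msupport_of_ae_eq (continuous_width u) continuous_const hae hL

end Measure

theorem pspan_posComb_le_pspan_macroid_general {n : ℕ}
    [MeasurableSpace (ConvexBody (EuclideanSpace ℝ (Fin n)))]
    [BorelSpace (ConvexBody (EuclideanSpace ℝ (Fin n)))]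
    (𝒦 : Set (ConvexBody (EuclideanSpace ℝ (Fin n))))
    (μ : Measure (ConvexBody (EuclideanSpace ℝ (Fin n)))) [IsProbabilityMeasure μ]
    (hconc : μ 𝒦ᶜ = 0)
    (hbd : Bornology.IsBounded (𝒦 ∩ msupport μ))
    (K : ConvexBody (EuclideanSpace ℝ (Fin n)))
    (hK : ∀ u, sfn K u = ∫ P, sfn P u ∂μ)
    (Q : ConvexBody (EuclideanSpace ℝ (Fin n)))
    (hQ : ∃ (N : ℕ) (c : Fin N → ℝ≥0) (L : Fin N → ConvexBody (EuclideanSpace ℝ (Fin n))),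
      (∀ i, L i ∈ 𝒦 ∩ msupport μ) ∧ Q = ∑ i, c i • L i) :
    pspan (Q : Set (EuclideanSpace ℝ (Fin n))) ≤ pspan (K : Set (EuclideanSpace ℝ (Fin n))) := by
  obtain ⟨N, c, L, hL, rfl⟩ := hQ
  have hnull : μ (𝒦 ∩ msupport μ)ᶜ = 0 := by
    rw [Set.compl_inter]
    exact measure_union_null hconc (measure_compl_msupport μ)
  have hint := integrable_sfn_of_isBounded hbd hnull
  rw [ConvexBody.coe_sum]
  refine (pspan_sum_le _ _).trans (iSup₂_le fun i _ => ?_)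
  rw [ConvexBody.coe_smul']
  exact (pspan_smul_le _ _).trans (pspan_le_of_mem_msupport hK hint (hL i).2)

theorem pspan_posComb_le_pspan_macroid {n : ℕ}
    [MeasurableSpace (ConvexBody (EuclideanSpace ℝ (Fin n)))]
    [BorelSpace (ConvexBody (EuclideanSpace ℝ (Fin n)))]
    (𝒦 : Set (ConvexBody (EuclideanSpace ℝ (Fin n)))) (h𝒦ne : 𝒦.Nonempty)
    (h𝒦meas : MeasurableSet 𝒦)
    (μ : Measure (ConvexBody (EuclideanSpace ℝ (Fin n)))) [IsProbabilityMeasure μ]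
    (hconc : μ 𝒦ᶜ = 0)
    (hbd : Bornology.IsBounded (𝒦 ∩ msupport μ))
    (K : ConvexBody (EuclideanSpace ℝ (Fin n)))
    (hK : ∀ u, sfn K u = ∫ P, sfn P u ∂μ)
    (Q : ConvexBody (EuclideanSpace ℝ (Fin n)))
    (hQ : ∃ (N : ℕ) (c : Fin N → ℝ≥0) (L : Fin N → ConvexBody (EuclideanSpace ℝ (Fin n))),
      (∀ i, L i ∈ 𝒦 ∩ msupport μ) ∧ Q = ∑ i, c i • L i) :
    pspan (Q : Set (EuclideanSpace ℝ (Fin n))) ≤ pspan (K : Set (EuclideanSpace ℝ (Fin n))) :=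
  pspan_posComb_le_pspan_macroid_general 𝒦 μ hconc hbd K hK Q hQ
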